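/- arXiv:0903.1724 — 7 statements merged into one kernel-verified Lean document; each statement's English description precedes it below -/
import Mathlib

section
/- For every prime power q there exists a B₂-sequence of size q in ℤ_{q²−1}. (Bose's theorem) -/
/-!
Let `K ⊊ L` be finite fields and pick `α ∈ L \ K`. If
`(α + a)(α + b) = (α + c)(α + d)` with `a, b, c, d ∈ K`, then
`α (a + b - c - d) = cd - ab`, and since `α ∉ K` both sides vanish; so `{a, b}` and `{c, d}`
have the same elementary symmetric functions and coincide. Thus the `|K|` units `α + c`
have pairwise distinct pairwise products, and a discrete logarithm `Lˣ ≃ ℤ/(|L| - 1)` turns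
them into a `B₂`-sequence; Bose's theorem is the case `K = 𝔽_q`, `L = 𝔽_{q²}`.
-/

/-- `E` is a `B₂`-sequence over the abelian group `A`: all sums of unordered
pairs of elements of `E` are distinct. -/
def IsB2Seq {A : Type*} [AddCommGroup A] (E : Finset A) : Prop :=
  ∀ a ∈ E, ∀ b ∈ E, ∀ c ∈ E, ∀ d ∈ E,
    a + b = c + d → (a = c ∧ b = d) ∨ (a = d ∧ b = c)

theorem IsB2Seq.map {A B : Type*} [AddCommGroup A] [AddCommGroup B] {E : Finset A}
    (hE : IsB2Seq E) (f : A →+ B) (hf : Function.Injective f) :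
    IsB2Seq (E.map ⟨f, hf⟩) := by
  simp only [IsB2Seq, Finset.forall_mem_map, Function.Embedding.coeFn_mk, ← map_add, hf.eq_iff]
  exact hE

theorem eq_and_eq_or_eq_and_eq_of_add_eq_add_of_mul_eq_mul {R : Type*} [CommRing R] [IsDomain R]
    {a b c d : R} (hs : a + b = c + d) (hp : a * b = c * d) :
    (a = c ∧ b = d) ∨ (a = d ∧ b = c) := by
  have hroot : (a - c) * (a - d) = 0 := by linear_combination a * hs - hp
  rcases mul_eq_zero.mp hroot with h | h
  · have hac := sub_eq_zero.mp h
    exact .inl ⟨hac, by subst hac; exact add_left_cancel hs⟩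
  · have had := sub_eq_zero.mp h
    exact .inr ⟨had, by subst had; linear_combination hs⟩

section

variable {K L : Type*} [Field K] [Field L] [Algebra K L] {α : L}

theorem add_algebraMap_ne_zero (hα : α ∉ Set.range (algebraMap K L)) (c : K) :
    α + algebraMap K L c ≠ 0 := by
  intro h
  exact hα ⟨-c, by rw [map_neg, eq_neg_of_add_eq_zero_left h]⟩

theorem eq_and_eq_or_eq_and_eq_of_mul_add_algebraMap (hα : α ∉ Set.range (algebraMap K L))
    {a b c d : K}
    (h : (α + algebraMap K L a) * (α + algebraMap K L b) =
      (α + algebraMap K L c) * (α + algebraMap K L d)) :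
    (a = c ∧ b = d) ∨ (a = d ∧ b = c) := by
  have hlin : α * algebraMap K L (a + b - (c + d)) = algebraMap K L (c * d - a * b) := by
    simp only [map_sub, map_add, map_mul]; linear_combination h
  have hs : a + b = c + d := by
    by_contra hs
    refine hα ⟨(c * d - a * b) / (a + b - (c + d)), ?_⟩
    rw [map_div₀, ← hlin, mul_div_cancel_right₀ _ ((map_ne_zero _).mpr (sub_ne_zero.mpr hs))]
  have hp : a * b = c * d := by
    rw [hs, sub_self, map_zero, mul_zero, eq_comm, map_eq_zero, sub_eq_zero] at hlin
    exact hlin.symm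
  exact eq_and_eq_or_eq_and_eq_of_add_eq_add_of_mul_eq_mul hs hp

noncomputable def unitsAddAlgebraMap (hα : α ∉ Set.range (algebraMap K L)) : K ↪ Additive Lˣ where
  toFun c := .ofMul (Units.mk0 _ (add_algebraMap_ne_zero hα c))
  inj' a b h := by
    simpa using congrArg (fun u : Additive Lˣ => (u.toMul : L)) h

@[simp]
theorem coe_toMul_unitsAddAlgebraMap (hα : α ∉ Set.range (algebraMap K L)) (c : K) :
    ((unitsAddAlgebraMap hα c).toMul : L) = α + algebraMap K L c :=
  rfl

theorem isB2Seq_map_unitsAddAlgebraMap [Fintype K] (hα : α ∉ Set.range (algebraMap K L)) :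
    IsB2Seq (Finset.univ.map (unitsAddAlgebraMap hα)) := by
  simp only [IsB2Seq, Finset.forall_mem_map, Finset.mem_univ, forall_const,
    (unitsAddAlgebraMap hα).injective.eq_iff]
  intro a b c d h
  apply eq_and_eq_or_eq_and_eq_of_mul_add_algebraMap hα
  simpa using congrArg (fun u : Additive Lˣ => (u.toMul : L)) h

theorem exists_isB2Seq_of_natCard_lt [Finite K] [Finite L]
    (hcard : Nat.card K < Nat.card L) :
    ∃ E : Finset (ZMod (Nat.card L - 1)), E.card = Nat.card K ∧ IsB2Seq E := by
  have := Fintype.ofFinite K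
  obtain ⟨α, hα⟩ : ∃ α : L, α ∉ Set.range (algebraMap K L) := by
    by_contra! h
    exact hcard.not_ge (Nat.card_le_card_of_surjective _ fun x => h x)
  let log : Additive Lˣ ≃+ ZMod (Nat.card L - 1) :=
    Nat.card_units L ▸ (zmodCyclicMulEquiv inferInstance).toAdditive.symm
  refine ⟨_, ?_, (isB2Seq_map_unitsAddAlgebraMap hα).map log.toAddMonoidHom log.injective⟩
  rw [Finset.card_map, Finset.card_map, Finset.card_univ, Nat.card_eq_fintype_card]

end

/-- Bose's theorem: for every prime power `q` there exists a `B₂`-sequence of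
size `q` in `ℤ_{q²-1}`. -/
theorem bose_B2_sequence (q : ℕ) (hq : IsPrimePow q) :
    ∃ E : Finset (ZMod (q ^ 2 - 1)), E.card = q ∧ IsB2Seq E := by
  obtain ⟨p, n, hp, hn, rfl⟩ := hq
  have := Fact.mk hp.nat_prime
  have hK : Nat.card (GaloisField p n) = p ^ n := GaloisField.card p n hn.ne'
  have hL := FiniteField.natCard_extension (GaloisField p n) p 2
  rw [← hK, ← hL]
  exact exists_isB2Seq_of_natCard_lt (hL ▸ lt_self_pow₀ Finite.one_lt_card one_lt_two)
end

section
/- Let Λ ⊆ ℤ² be the lattice generated by rows v₁ = (v₁₁, v₁₂) and v₂ = (v₂₁, v₂₂) with nonzero determinant N = |det G|, inducing a lattice tiling of ℤ². Then the map i ↦ (i, 0) mod Λ from ℤ_N to ℤ²/Λ is a bijection if and only if gcd(v₁₂, v₂₂) = 1. (Folding with direction δ = (+1, 0).) -/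
/-!
Write `D = v₁₁ v₂₂ - v₁₂ v₂₁` and `f k = (k, 0) mod Λ`. Since
`D • (1, 0) = v₂₂ • v₁ - v₁₂ • v₂ ∈ Λ`, `f` is `N`-periodic, so the folding map `ℤ_N → ℤ²/Λ`
has the same image as `f`. As `f 1 = (1, 0)`, `f` is onto iff `(0, 1) ∈ ℤ (1, 0) + Λ`, i.e. iff
`x v₁₂ + y v₂₂ = 1` is solvable in integers. Conversely, if `v₁₂, v₂₂` are coprime, Cramer's rule
shows that `(k, 0) ∈ Λ` forces `D ∣ k`, so the folding map is also injective.
-/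

section PeriodicMaps

variable {G : Type*} [AddGroup G] {N : ℕ} [NeZero N] (f : ℤ →+ G)

theorem ZMod.surjective_comp_val_iff (hf : f N = 0) :
    Function.Surjective (fun i : ZMod N => f i.val) ↔ Function.Surjective f := by
  refine ⟨fun h g => ?_, fun h g => ?_⟩
  · obtain ⟨i, rfl⟩ := h g
    exact ⟨_, rfl⟩
  · obtain ⟨k, rfl⟩ := h g
    have hk : ((k : ZMod N).val : ℤ) = k - (k / N) • (N : ℤ) := by
      rw [ZMod.val_intCast, Int.emod_def, smul_eq_mul, mul_comm]
    refine ⟨k, ?_⟩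
    simp only [hk, map_sub, map_zsmul, hf, smul_zero, sub_zero]

theorem ZMod.injective_comp_val (hker : ∀ k, f k = 0 → (N : ℤ) ∣ k) :
    Function.Injective (fun i : ZMod N => f i.val) := by
  intro i j hij
  have hdvd : (N : ℤ) ∣ (j.val : ℤ) - i.val :=
    hker _ (by rw [map_sub, sub_eq_zero]; exact hij.symm)
  rw [← ZMod.natCast_zmod_val i, ← ZMod.natCast_zmod_val j]
  exact_mod_cast (ZMod.intCast_eq_intCast_iff_dvd_sub _ _ N).2 hdvd

end PeriodicMaps

def QuotientAddGroup.mkInl (Λ : AddSubgroup (ℤ × ℤ)) : ℤ →+ (ℤ × ℤ) ⧸ Λ :=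
  (QuotientAddGroup.mk' Λ).comp (AddMonoidHom.inl ℤ ℤ)

@[simp]
theorem QuotientAddGroup.mkInl_apply (Λ : AddSubgroup (ℤ × ℤ)) (k : ℤ) :
    QuotientAddGroup.mkInl Λ k = QuotientAddGroup.mk (k, 0) :=
  rfl

section PlaneLattice

variable {a b c d : ℤ}

theorem mem_closure_pair_iff_exists {p : ℤ × ℤ} :
    p ∈ AddSubgroup.closure {(a, b), (c, d)} ↔
      ∃ x y : ℤ, x * a + y * c = p.1 ∧ x * b + y * d = p.2 := by
  simp only [AddSubgroup.mem_closure_pair, Prod.ext_iff, Prod.fst_add, Prod.snd_add,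
    Prod.smul_fst, Prod.smul_snd, smul_eq_mul]

theorem det_mul_mem_closure_pair (k : ℤ) :
    ((a * d - b * c) * k, 0) ∈ AddSubgroup.closure {(a, b), (c, d)} :=
  mem_closure_pair_iff_exists.2 ⟨d * k, -(b * k), by ring, by ring⟩

theorem det_dvd_of_mem_closure_pair (hbd : IsCoprime b d) {k : ℤ}
    (hk : (k, 0) ∈ AddSubgroup.closure {(a, b), (c, d)}) : a * d - b * c ∣ k := by
  obtain ⟨x, y, h₁, h₂⟩ := mem_closure_pair_iff_exists.1 hk
  obtain ⟨u, w, huw⟩ := hbd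
  -- Cramer's rule: `k * d = D * x` and `k * b = -D * y`; combine them with `u * b + w * d = 1`.
  exact ⟨w * x - u * y, by
    linear_combination (-(u * b) - w * d) * h₁ + (u * a + w * c) * h₂ - k * huw⟩

theorem mkInl_natAbs_det_eq_zero :
    QuotientAddGroup.mkInl (AddSubgroup.closure {(a, b), (c, d)}) (a * d - b * c).natAbs = 0 := by
  rw [← Int.mul_sign_self]
  exact (QuotientAddGroup.eq_zero_iff _).2 (det_mul_mem_closure_pair _)

theorem natAbs_det_dvd_of_mkInl_eq_zero (hbd : IsCoprime b d) {k : ℤ}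
    (hk : QuotientAddGroup.mkInl (AddSubgroup.closure {(a, b), (c, d)}) k = 0) :
    ((a * d - b * c).natAbs : ℤ) ∣ k :=
  Int.natAbs_dvd.2 (det_dvd_of_mem_closure_pair hbd ((QuotientAddGroup.eq_zero_iff _).1 hk))

theorem mkInl_surjective_iff :
    Function.Surjective (QuotientAddGroup.mkInl (AddSubgroup.closure {(a, b), (c, d)})) ↔
      IsCoprime b d := by
  constructor
  · intro h
    obtain ⟨k, hk⟩ := h (QuotientAddGroup.mk (0, 1))
    rw [QuotientAddGroup.mkInl_apply] at hk
    obtain ⟨x, y, -, h₂⟩ := mem_closure_pair_iff_exists.1 (QuotientAddGroup.eq.1 hk)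
    exact ⟨x, y, by simpa using h₂⟩
  · rintro ⟨u, w, huw⟩ q
    obtain ⟨⟨p₁, p₂⟩, rfl⟩ := QuotientAddGroup.mk_surjective q
    refine ⟨p₁ - p₂ * (u * a + w * c), ?_⟩
    rw [QuotientAddGroup.mkInl_apply, QuotientAddGroup.eq]
    simp only [Prod.neg_mk, Prod.mk_add_mk, neg_zero, zero_add]
    exact mem_closure_pair_iff_exists.2 ⟨p₂ * u, p₂ * w, by ring, by linear_combination p₂ * huw⟩

end PlaneLattice

/-- Folding with direction `δ = (+1, 0)`: for the sublattice `Λ ⊆ ℤ²` generated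
by `v₁ = (v₁₁, v₁₂)` and `v₂ = (v₂₁, v₂₂)` with `N = |det G| ≠ 0`, the map
`i ↦ (i, 0) mod Λ` from `ℤ_N` to `ℤ²/Λ` is a bijection if and only if
`gcd(v₁₂, v₂₂) = 1`. -/
theorem folding_two_dim_dir_one_zero (v₁₁ v₁₂ v₂₁ v₂₂ : ℤ)
    (Λ : AddSubgroup (ℤ × ℤ)) (hΛ : Λ = AddSubgroup.closure {(v₁₁, v₁₂), (v₂₁, v₂₂)})
    (N : ℕ) (hN : N = (v₁₁ * v₂₂ - v₁₂ * v₂₁).natAbs) (hN0 : N ≠ 0) :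
    Function.Bijective
        (fun i : ZMod N => (QuotientAddGroup.mk ((i.val : ℤ), (0 : ℤ)) : (ℤ × ℤ) ⧸ Λ)) ↔
      Int.gcd v₁₂ v₂₂ = 1 := by
  subst hΛ
  have : NeZero N := ⟨hN0⟩
  have hf : QuotientAddGroup.mkInl _ N = 0 := hN ▸ mkInl_natAbs_det_eq_zero
  simp only [← QuotientAddGroup.mkInl_apply]
  rw [← Int.isCoprime_iff_gcd_eq_one, ← mkInl_surjective_iff, ← ZMod.surjective_comp_val_iff _ hf]
  refine ⟨fun h => h.2, fun h => ⟨?_, h⟩⟩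
  rw [ZMod.surjective_comp_val_iff _ hf, mkInl_surjective_iff] at h
  exact ZMod.injective_comp_val _ fun k hk => hN ▸ natAbs_det_dvd_of_mkInl_eq_zero h hk
end

section
/- Let Λ ⊆ ℤ² be the lattice generated by v₁ = (v₁₁, v₁₂) and v₂ = (v₂₁, v₂₂) with N = |det G| ≠ 0. The map i ↦ (i, i) mod Λ from ℤ_N to ℤ²/Λ is a bijection if and only if gcd(v₂₂ − v₂₁, v₁₁ − v₁₂) = 1. (Folding with direction δ = (+1, +1).) -/
/-!
Write `Λ = ⟨(a, b), (c, d)⟩` and `D = ad - bc`. Modulo `Λ` the diagonal vector `(1, 1)` has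
order dividing `|D|`, since `(d - c)(a, b) + (a - b)(c, d) = (D, D)`. Subtracting the two
coordinates of `m(a, b) + n(c, d) = (1 - k, -k)` gives `m(a - b) + n(c - d) = 1`, and
conversely a Bézout relation for `d - c` and `a - b` yields such `m, n, k`; so the diagonal meets
every coset of `Λ` exactly when `d - c` and `a - b` are coprime. In that case
Cramer's rule shows `(k, k) ∈ Λ` forces `D ∣ k`, so `(1, 1)` has order exactly `|D|` and the
folding map is also injective.
-/

open QuotientAddGroup

namespace Int

theorem mem_closure_pair_iff {a b c d x y : ℤ} :
    (x, y) ∈ AddSubgroup.closure {(a, b), (c, d)} ↔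
      ∃ m n : ℤ, m * a + n * c = x ∧ m * b + n * d = y := by
  simp [AddSubgroup.mem_closure_pair, Prod.ext_iff]

variable {a b c d : ℤ}

theorem diag_det_mem_closure_pair :
    (a * d - b * c, a * d - b * c) ∈ AddSubgroup.closure {(a, b), (c, d)} :=
  mem_closure_pair_iff.mpr ⟨d - c, a - b, by ring, by ring⟩

theorem diag_mem_closure_pair_iff (hcop : IsCoprime (d - c) (a - b)) {k : ℤ} :
    (k, k) ∈ AddSubgroup.closure {(a, b), (c, d)} ↔ a * d - b * c ∣ k := by
  refine ⟨fun hk => ?_, fun ⟨q, hq⟩ => hq ▸ ?_⟩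
  · obtain ⟨m, n, h₁, h₂⟩ := mem_closure_pair_iff.mp hk
    obtain ⟨u, w, huw⟩ := hcop
    have hm : k * (d - c) = m * (a * d - b * c) := by linear_combination c * h₂ - d * h₁
    have hn : k * (a - b) = n * (a * d - b * c) := by linear_combination b * h₁ - a * h₂
    exact ⟨u * m + w * n, by linear_combination -k * huw + u * hm + w * hn⟩
  · simpa [mul_comm q] using zsmul_mem diag_det_mem_closure_pair q

theorem surjective_mk_diag_closure_pair_iff :
    Function.Surjective
        (fun k : ℤ => (mk (k, k) : (ℤ × ℤ) ⧸ AddSubgroup.closure {(a, b), (c, d)})) ↔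
      IsCoprime (d - c) (a - b) := by
  constructor
  · intro hsurj
    obtain ⟨k, hk⟩ := hsurj (mk (1, 0))
    obtain ⟨m, n, h₁, h₂⟩ := mem_closure_pair_iff.mp (QuotientAddGroup.eq.mp hk)
    exact ⟨-n, m, by linear_combination h₁ - h₂⟩
  · rintro ⟨u, w, huw⟩ q
    obtain ⟨⟨x, y⟩, rfl⟩ := mk_surjective q
    refine ⟨x + (y - x) * (w * a - u * c), QuotientAddGroup.eq.mpr ?_⟩
    simp only [Prod.neg_mk, Prod.mk_add_mk]
    exact mem_closure_pair_iff.mpr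
      ⟨(x - y) * w, (y - x) * u, by ring, by linear_combination (y - x) * huw⟩

end Int

section Folding

variable {Λ : AddSubgroup (ℤ × ℤ)} {N : ℕ}

theorem mk_diag_emod (hN : ((N : ℤ), (N : ℤ)) ∈ Λ) (k : ℤ) :
    (mk (k % N, k % N) : (ℤ × ℤ) ⧸ Λ) = mk (k, k) := by
  refine QuotientAddGroup.eq.mpr ?_
  convert zsmul_mem hN (k / N) using 1
  simp only [Int.emod_def, Prod.smul_mk, smul_eq_mul, Prod.neg_mk, Prod.mk_add_mk]
  ext <;> ring

theorem bijective_mk_diag_val [NeZero N] (hker : ∀ k : ℤ, (k, k) ∈ Λ ↔ (N : ℤ) ∣ k)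
    (hsurj : Function.Surjective (fun k : ℤ => (mk (k, k) : (ℤ × ℤ) ⧸ Λ))) :
    Function.Bijective (fun i : ZMod N => (mk ((i.val : ℤ), (i.val : ℤ)) : (ℤ × ℤ) ⧸ Λ)) := by
  refine ⟨fun i j hij => ?_, fun q => ?_⟩
  · have hdvd : (N : ℤ) ∣ (j.val : ℤ) - i.val := (hker _).mp (by
      simpa [sub_eq_neg_add] using QuotientAddGroup.eq.mp hij)
    rw [← ZMod.natCast_zmod_val i, ← ZMod.natCast_zmod_val j]
    exact_mod_cast (ZMod.intCast_eq_intCast_iff_dvd_sub _ _ N).mpr hdvd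
  · obtain ⟨k, rfl⟩ := hsurj q
    exact ⟨k, by simpa only [ZMod.val_intCast] using mk_diag_emod ((hker N).mpr dvd_rfl) k⟩

end Folding

/-- Folding with direction `δ = (+1, +1)`: for the sublattice `Λ ⊆ ℤ²` generated
by `v₁ = (v₁₁, v₁₂)` and `v₂ = (v₂₁, v₂₂)` with `N = |det G| ≠ 0`, the map
`i ↦ (i, i) mod Λ` from `ℤ_N` to `ℤ²/Λ` is a bijection if and only if
`gcd(v₂₂ - v₂₁, v₁₁ - v₁₂) = 1`. -/
theorem folding_two_dim_dir_one_one (v₁₁ v₁₂ v₂₁ v₂₂ : ℤ)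
    (Λ : AddSubgroup (ℤ × ℤ)) (hΛ : Λ = AddSubgroup.closure {(v₁₁, v₁₂), (v₂₁, v₂₂)})
    (N : ℕ) (hN : N = (v₁₁ * v₂₂ - v₁₂ * v₂₁).natAbs) (hN0 : N ≠ 0) :
    Function.Bijective
        (fun i : ZMod N => (QuotientAddGroup.mk ((i.val : ℤ), (i.val : ℤ)) : (ℤ × ℤ) ⧸ Λ)) ↔
      Int.gcd (v₂₂ - v₂₁) (v₁₁ - v₁₂) = 1 := by
  have : NeZero N := ⟨hN0⟩
  subst hΛ
  rw [← Int.isCoprime_iff_gcd_eq_one, ← Int.surjective_mk_diag_closure_pair_iff]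
  refine ⟨fun hbij q => ?_, fun hsurj => bijective_mk_diag_val (fun k => ?_) hsurj⟩
  · obtain ⟨i, hi⟩ := hbij.2 q
    exact ⟨i.val, hi⟩
  · rw [hN, Int.natAbs_dvd]
    exact Int.diag_mem_closure_pair_iff (Int.surjective_mk_diag_closure_pair_iff.mp hsurj)
end

section
/- Let Λ ⊆ ℤ² be the lattice generated by v₁ = (v₁₁, v₁₂) and v₂ = (v₂₁, v₂₂) with N = |det G| ≠ 0. The map i ↦ (i, −i) mod Λ from ℤ_N to ℤ²/Λ is a bijection if and only if gcd(v₂₂ + v₂₁, v₁₁ + v₁₂) = 1. (Folding with direction δ = (+1, −1).) -/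
/-!
With `s = v₁₁ + v₁₂` and `t = v₂₁ + v₂₂`, the coordinate sum maps `Λ` onto the ideal `(s, t)`, so
the antidiagonal `k ↦ (k, -k)` meets every class of `ℤ² / Λ` exactly when `(s, t) = ℤ`, i.e. `(1, 0)`
is hit. The antidiagonal always contains `det G • (1, -1) = t • v₁ - s • v₂`, and when `s, t` are
coprime every antidiagonal vector `m • v₁ + n • v₂` of `Λ` has `(m, n)` a multiple of `(t, -s)`,
so the kernel of `k ↦ [(k, -k)]` is exactly `N ℤ`.
-/

open Function

theorem ZMod.bijective_comp_val_of_ker {G : Type*} [AddGroup G] {N : ℕ} [NeZero N]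
    (f : ℤ →+ G) (hf : Surjective f) (hker : ∀ k, f k = 0 ↔ (N : ℤ) ∣ k) :
    Bijective fun i : ZMod N => f i.val := by
  have hcast : ∀ k l : ℤ, f k = f l ↔ (k : ZMod N) = l := fun k l => by
    rw [ZMod.intCast_eq_intCast_iff_dvd_sub, ← hker, map_sub, sub_eq_zero, eq_comm]
  refine ⟨fun i j hij => ?_, fun g => ?_⟩
  · simpa using (hcast _ _).1 hij
  · obtain ⟨k, rfl⟩ := hf g
    exact ⟨k, (hcast _ _).2 (by simp)⟩

section ClosurePair

variable {a b c d : ℤ}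

theorem Int.prod_mem_closure_pair_iff {x y : ℤ} :
    (x, y) ∈ AddSubgroup.closure {(a, b), (c, d)} ↔
      ∃ m n : ℤ, m * a + n * c = x ∧ m * b + n * d = y := by
  simp [AddSubgroup.mem_closure_pair, Prod.ext_iff]

theorem Int.antidiag_mem_closure_pair_of_dvd {k : ℤ} (h : a * d - b * c ∣ k) :
    (k, -k) ∈ AddSubgroup.closure {(a, b), (c, d)} := by
  obtain ⟨t, rfl⟩ := h
  exact Int.prod_mem_closure_pair_iff.2 ⟨t * (c + d), -(t * (a + b)), by ring, by ring⟩

theorem Int.dvd_of_antidiag_mem_closure_pair (hcop : IsCoprime (a + b) (c + d)) {k : ℤ}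
    (h : (k, -k) ∈ AddSubgroup.closure {(a, b), (c, d)}) : a * d - b * c ∣ k := by
  obtain ⟨α, β, hαβ⟩ := hcop
  obtain ⟨m, n, rfl, hy⟩ := Int.prod_mem_closure_pair_iff.1 h
  have hsum : m * (a + b) + n * (c + d) = 0 := by linarith
  refine ⟨β * m - α * n, ?_⟩
  linear_combination (a * α + c * β) * hsum - (m * a + n * c) * hαβ

theorem Int.exists_sub_antidiag_mem_closure_pair (hcop : IsCoprime (a + b) (c + d)) (x y : ℤ) :
    ∃ k : ℤ, (x - k, y + k) ∈ AddSubgroup.closure {(a, b), (c, d)} := by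
  obtain ⟨α, β, hαβ⟩ := hcop
  refine ⟨x - (x + y) * (α * a + β * c),
    Int.prod_mem_closure_pair_iff.2 ⟨(x + y) * α, (x + y) * β, by ring, ?_⟩⟩
  linear_combination (x + y) * hαβ

theorem Int.isCoprime_of_mem_closure_pair {x y : ℤ}
    (h : (x, y) ∈ AddSubgroup.closure {(a, b), (c, d)}) (hxy : x + y = 1) :
    IsCoprime (a + b) (c + d) := by
  obtain ⟨m, n, rfl, rfl⟩ := Int.prod_mem_closure_pair_iff.1 h
  exact ⟨m, n, by linear_combination hxy⟩

end ClosurePair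

/-- Folding with direction `δ = (+1, -1)`: for the sublattice `Λ ⊆ ℤ²` generated
by `v₁ = (v₁₁, v₁₂)` and `v₂ = (v₂₁, v₂₂)` with `N = |det G| ≠ 0`, the map
`i ↦ (i, -i) mod Λ` from `ℤ_N` to `ℤ²/Λ` is a bijection if and only if
`gcd(v₂₂ + v₂₁, v₁₁ + v₁₂) = 1`. -/
theorem folding_two_dim_dir_one_negone (v₁₁ v₁₂ v₂₁ v₂₂ : ℤ)
    (Λ : AddSubgroup (ℤ × ℤ)) (hΛ : Λ = AddSubgroup.closure {(v₁₁, v₁₂), (v₂₁, v₂₂)})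
    (N : ℕ) (hN : N = (v₁₁ * v₂₂ - v₁₂ * v₂₁).natAbs) (hN0 : N ≠ 0) :
    Function.Bijective
        (fun i : ZMod N => (QuotientAddGroup.mk ((i.val : ℤ), -(i.val : ℤ)) : (ℤ × ℤ) ⧸ Λ)) ↔
      Int.gcd (v₂₂ + v₂₁) (v₁₁ + v₁₂) = 1 := by
  subst hΛ hN
  have : NeZero (v₁₁ * v₂₂ - v₁₂ * v₂₁).natAbs := ⟨hN0⟩
  let f : ℤ →+ (ℤ × ℤ) ⧸ AddSubgroup.closure {(v₁₁, v₁₂), (v₂₁, v₂₂)} :=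
    (QuotientAddGroup.mk' _).comp ((AddMonoidHom.id ℤ).prod (-AddMonoidHom.id ℤ))
  have hf : ∀ k, f k = QuotientAddGroup.mk (k, -k) := fun _ => rfl
  change Bijective (fun i : ZMod _ => f i.val) ↔ _
  rw [← Int.isCoprime_iff_gcd_eq_one, isCoprime_comm, add_comm v₂₂]
  constructor
  · rintro ⟨-, hsurj⟩
    obtain ⟨i, hi⟩ := hsurj (QuotientAddGroup.mk (1, 0))
    simp only [hf, QuotientAddGroup.eq, Prod.neg_mk, Prod.mk_add_mk] at hi
    exact Int.isCoprime_of_mem_closure_pair hi (by ring)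
  · intro hcop
    refine ZMod.bijective_comp_val_of_ker f (fun q => ?_) (fun k => ?_)
    · obtain ⟨⟨x, y⟩, rfl⟩ := QuotientAddGroup.mk_surjective q
      obtain ⟨k, hk⟩ := Int.exists_sub_antidiag_mem_closure_pair hcop x y
      refine ⟨k, (hf k).trans (QuotientAddGroup.eq.2 ?_)⟩
      simpa only [Prod.neg_mk, Prod.mk_add_mk, neg_neg, neg_add_eq_sub, add_comm k] using hk
    · rw [hf, QuotientAddGroup.eq_zero_iff, Int.natAbs_dvd]
      exact ⟨Int.dvd_of_antidiag_mem_closure_pair hcop, Int.antidiag_mem_closure_pair_of_dvd⟩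
end

section
/- Let Λ ⊆ ℤ^D be a full-rank sublattice with generator matrix G (rows v₁,…,v_D) and N = |det G|. Fix a nonzero direction vector δ ∈ {−1,0,1}^D. Then the map i ↦ i·δ mod Λ from ℤ_N to ℤ^D/Λ is a bijection if and only if gcd(det H₁, det H₂, …, det H_D) = 1, where H is the (D−1)×D matrix whose rows encode the linear conditions (with first δ-coordinate equal to +1 after reordering): u_{rj} = v_{jr} − v_{j1} for coordinates r with δ_r = +1 (r ≥ 2), u_{rj} = v_{jr} + v_{j1} for δ_r = −1, u_{rj} = v_{jr} for δ_r = 0; and H_i is H with column i deleted. -/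
/-!
Let `Λ` be the row lattice of `V` and `w := δ ᵥ* adj V`. By Cramer's rule, `x ᵥ* V = k • δ` has
an integral solution iff `det V` divides every entry of `k • w`, i.e. iff `det V ∣ k * g` for
`g := gcd w`; and `g ∣ det V` because `w ᵥ* V = det V • δ` and `δ 0 = 1`. So `δ` has order
`|det V / g|` in `ℤ^D ⧸ Λ`, a group of order `|det V|`, and `i ↦ i • δ` is a bijection from
`ℤ_N` iff `g` is a unit.

To compute `w`, let `E` be the column shear with `det E = 1` and `δ ᵥ* E = e₀`. Then
`w = e₀ ᵥ* adj (V * E)` is the first row of `adj (V * E)`, whose entries are the signed maximal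
minors of `V * E` without its first column; that block of `V * E` is `Hᵀ`, so `w j = ± det H_j`.
-/

open Matrix

theorem Finset.gcd_eq_of_forall_associated {α ι : Type*} [CommMonoidWithZero α]
    [NormalizedGCDMonoid α] {s : Finset ι} {f g : ι → α} (h : ∀ i ∈ s, Associated (f i) (g i)) :
    s.gcd f = s.gcd g :=
  dvd_antisymm_of_normalize_eq normalize_gcd normalize_gcd
    (dvd_gcd fun i hi => (gcd_dvd hi).trans (h i hi).dvd)
    (dvd_gcd fun i hi => (gcd_dvd hi).trans (h i hi).symm.dvd)

theorem Finset.dvd_mul_gcd_iff {α ι : Type*} [CommMonoidWithZero α] [NormalizedGCDMonoid α]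
    (s : Finset ι) (f : ι → α) (a k : α) :
    a ∣ k * s.gcd f ↔ ∀ i ∈ s, a ∣ k * f i := by
  rw [← (s.gcd_mul_left' f k).dvd_iff_dvd_right, Finset.dvd_gcd_iff]

theorem forall_dvd_mul_imp_dvd_iff_isUnit {α : Type*} [CommMonoidWithZero α] [IsCancelMulZero α]
    {a g : α} (ha : a ≠ 0) (hg : g ∣ a) : (∀ k, a ∣ k * g → a ∣ k) ↔ IsUnit g := by
  refine ⟨fun h => ?_, fun hu k => hu.dvd_mul_right.mp⟩
  obtain ⟨m, rfl⟩ := hg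
  obtain ⟨t, ht⟩ := h m (by rw [mul_comm])
  have hm : m ≠ 0 := right_ne_zero_of_mul ha
  refine isUnit_of_dvd_one ⟨t, mul_left_cancel₀ hm ?_⟩
  rw [mul_one, ← mul_assoc, mul_comm m g]
  exact ht

theorem ZMod.bijective_val_zsmul_iff {Q : Type*} [AddCommGroup Q] {N : ℕ} [NeZero N]
    (hQ : Nat.card Q = N) (x : Q) :
    Function.Bijective (fun i : ZMod N => (i.val : ℤ) • x) ↔
      ∀ k : ℤ, k • x = 0 → (N : ℤ) ∣ k := by
  have hNx : (N : ℤ) • x = 0 := by rw [← hQ, natCast_zsmul]; exact card_nsmul_eq_zero'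
  let f : ZMod N →+ Q := ZMod.lift N ⟨zmultiplesHom Q x, by simpa using hNx⟩
  have hf : ∀ k : ℤ, f k = k • x := fun k => ZMod.lift_coe _ _ _
  have hfv : (fun i : ZMod N => (i.val : ℤ) • x) = f := by
    funext i
    rw [← hf]
    simp
  have : Finite Q := Nat.finite_of_card_ne_zero (hQ ▸ NeZero.ne N)
  rw [hfv, Nat.bijective_iff_injective_and_card, Nat.card_zmod, hQ, and_iff_left rfl,
    injective_iff_map_eq_zero]
  refine ⟨fun h k hk => ?_, fun h i hi => ?_⟩
  · rw [← ZMod.intCast_zmod_eq_zero_iff_dvd]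
    exact h _ ((hf k).trans hk)
  · obtain ⟨k, rfl⟩ := ZMod.intCast_surjective i
    rw [ZMod.intCast_zmod_eq_zero_iff_dvd]
    exact h k ((hf k).symm.trans hi)

namespace Matrix

section CommRing

variable {R n : Type*} [CommRing R] [Fintype n] [DecidableEq n]

theorem mul_adjugate_mul_of_det_eq_one {E : Matrix n n R} (hE : E.det = 1) (A : Matrix n n R) :
    E * (A * E).adjugate = A.adjugate := by
  rw [adjugate_mul_distrib, ← Matrix.mul_assoc, mul_adjugate, hE, one_smul, Matrix.one_mul]

def colShear (i : n) (δ : n → R) : Matrix n n R :=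
  1 - vecMulVec (Pi.single i 1) (δ - Pi.single i 1)

variable {i : n} {δ : n → R}

theorem det_colShear (h : δ i = 1) : (colShear i δ).det = 1 := by
  rw [colShear, vecMulVec_eq Unit, det_one_sub_mul_comm, det_unique, sub_apply, one_apply_eq,
    replicateRow_mul_replicateCol_apply, sub_dotProduct, dotProduct_single_one]
  simp [h]

theorem vecMul_colShear (h : δ i = 1) : δ ᵥ* colShear i δ = Pi.single i 1 := by
  rw [colShear, vecMul_sub, vecMul_one, vecMul_vecMulVec, dotProduct_single_one, h, one_smul,
    sub_sub_cancel]

theorem mul_colShear_apply (V : Matrix n n R) (j : n) {c : n} (hc : c ≠ i) :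
    (V * colShear i δ) j c = V j c - δ c * V j i := by
  simp [colShear, Matrix.mul_sub, mul_vecMulVec, vecMulVec_apply, hc, mul_comm]

theorem vecMul_adjugate_eq_adjugate_mul_colShear (h : δ i = 1) (V : Matrix n n R) :
    δ ᵥ* V.adjugate = (V * colShear i δ).adjugate i := by
  rw [← mul_adjugate_mul_of_det_eq_one (det_colShear h), ← vecMul_vecMul, vecMul_colShear h,
    single_one_vecMul]
  rfl

end CommRing

theorem exists_vecMul_eq_iff_forall_det_dvd {R n : Type*} [CommRing R] [IsDomain R]
    [Fintype n] [DecidableEq n] {A : Matrix n n R} (hA : A.det ≠ 0) (b : n → R) :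
    (∃ x, x ᵥ* A = b) ↔ ∀ j, A.det ∣ (b ᵥ* A.adjugate) j := by
  constructor
  · rintro ⟨x, rfl⟩ j
    rw [vecMul_vecMul, mul_adjugate, vecMul_smul, vecMul_one]
    exact dvd_mul_right _ _
  · intro h
    choose x hx using h
    refine ⟨x, smul_right_injective _ hA ?_⟩
    have hdx : A.det • x = b ᵥ* A.adjugate := funext fun j => (hx j).symm
    change A.det • (x ᵥ* A) = A.det • b
    rw [← smul_vecMul, hdx, vecMul_vecMul, adjugate_mul, vecMul_smul, vecMul_one]

theorem gcd_vecMul_adjugate_dvd_det_mul {R n : Type*} [CommRing R] [IsDomain R]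
    [NormalizedGCDMonoid R] [Fintype n] [DecidableEq n] (A : Matrix n n R) (b : n → R) (i : n) :
    Finset.univ.gcd (b ᵥ* A.adjugate) ∣ A.det * b i := by
  have h : (b ᵥ* A.adjugate) ᵥ* A = A.det • b := by
    rw [vecMul_vecMul, adjugate_mul, vecMul_smul, vecMul_one]
  rw [← smul_eq_mul, ← Pi.smul_apply, ← h]
  exact Finset.dvd_sum fun j _ => (Finset.gcd_dvd (Finset.mem_univ j)).mul_right _

section Lattice

variable {n : Type*} [Fintype n] [DecidableEq n] {V : Matrix n n ℤ}

theorem index_closure_range_eq_natAbs_det (hV : V.det ≠ 0) :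
    (AddSubgroup.closure (Set.range V)).index = V.det.natAbs := by
  have h := Submodule.natAbs_det_basis_change (Pi.basisFun ℤ n) _
    (Module.Basis.span (linearIndependent_rows_of_det_ne_zero hV))
  rw [Pi.basisFun_det_apply] at h
  rw [← Submodule.span_int_eq_addSubgroupClosure]
  refine h.symm.trans ?_
  congr
  ext i j
  simp [Module.Basis.span_apply]

theorem zsmul_mem_closure_range_iff (hV : V.det ≠ 0) (δ : n → ℤ) (k : ℤ) :
    k • δ ∈ AddSubgroup.closure (Set.range V) ↔
      V.det ∣ k * Finset.univ.gcd (δ ᵥ* V.adjugate) := by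
  rw [← Submodule.span_int_eq_addSubgroupClosure, Submodule.mem_toAddSubgroup]
  change k • δ ∈ Submodule.span ℤ (Set.range V.row) ↔ _
  rw [← range_vecMulLinear, LinearMap.mem_range]
  simp only [vecMulLinear_apply]
  rw [exists_vecMul_eq_iff_forall_det_dvd hV, Finset.dvd_mul_gcd_iff]
  simp only [smul_vecMul, Pi.smul_apply, smul_eq_mul, Finset.mem_univ, forall_const]

theorem bijective_zmod_natAbs_det_iff_isUnit_gcd (hV : V.det ≠ 0) {δ : n → ℤ} {i : n}
    (hδ : δ i = 1) [NeZero V.det.natAbs] :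
    Function.Bijective (fun k : ZMod V.det.natAbs =>
        (QuotientAddGroup.mk ((k.val : ℤ) • δ) : (n → ℤ) ⧸ AddSubgroup.closure (Set.range V))) ↔
      IsUnit (Finset.univ.gcd (δ ᵥ* V.adjugate)) := by
  simp only [QuotientAddGroup.mk_zsmul]
  rw [ZMod.bijective_val_zsmul_iff (index_closure_range_eq_natAbs_det hV)]
  simp only [← QuotientAddGroup.mk_zsmul, QuotientAddGroup.eq_zero_iff,
    zsmul_mem_closure_range_iff hV, Int.natAbs_dvd]
  exact forall_dvd_mul_imp_dvd_iff_isUnit hV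
    (by simpa [hδ] using gcd_vecMul_adjugate_dvd_det_mul V δ i)

end Lattice

end Matrix

theorem vecMul_adjugate_eq_neg_one_pow_mul_det {R : Type*} [CommRing R] {d : ℕ}
    (V : Matrix (Fin (d + 1)) (Fin (d + 1)) R) {δ : Fin (d + 1) → R} (hδ0 : δ 0 = 1)
    {H : Matrix (Fin d) (Fin (d + 1)) R} (hH : ∀ r j, H r j = V j r.succ - δ r.succ * V j 0)
    (j : Fin (d + 1)) :
    (δ ᵥ* V.adjugate) j =
      (-1) ^ (j : ℕ) * (Matrix.of fun r c : Fin d => H r (j.succAbove c)).det := by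
  rw [vecMul_adjugate_eq_adjugate_mul_colShear hδ0, adjugate_fin_succ_eq_det_submatrix,
    Fin.val_zero, add_zero, ← det_transpose]
  congr 2
  ext r c
  simp [Fin.succAbove_zero, hH, mul_colShear_apply V _ (Fin.succ_ne_zero r)]

theorem folding_multidim_gcd_criterion_general (d : ℕ)
    (V : Matrix (Fin (d + 1)) (Fin (d + 1)) ℤ)
    (δ : Fin (d + 1) → ℤ)
    (hδ0 : δ 0 = 1)
    (Λ : AddSubgroup (Fin (d + 1) → ℤ))
    (hΛ : Λ = AddSubgroup.closure (Set.range fun j r => V j r))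
    (N : ℕ) (hN : N = V.det.natAbs) (hN0 : N ≠ 0)
    (H : Matrix (Fin d) (Fin (d + 1)) ℤ)
    (hH : ∀ r j, H r j = V j r.succ - δ r.succ * V j 0) :
    Function.Bijective
        (fun i : ZMod N =>
          (QuotientAddGroup.mk ((i.val : ℤ) • δ) : (Fin (d + 1) → ℤ) ⧸ Λ)) ↔
      Finset.univ.gcd (fun i : Fin (d + 1) =>
        (Matrix.of fun r c : Fin d => H r (i.succAbove c)).det) = 1 := by
  subst hΛ hN
  have hdet : V.det ≠ 0 := by simpa using hN0
  have : NeZero V.det.natAbs := ⟨hN0⟩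
  have hgcd : Finset.univ.gcd (δ ᵥ* V.adjugate) = Finset.univ.gcd (fun i : Fin (d + 1) =>
      (Matrix.of fun r c : Fin d => H r (i.succAbove c)).det) :=
    Finset.gcd_eq_of_forall_associated fun j _ => by
      rw [vecMul_adjugate_eq_neg_one_pow_mul_det V hδ0 hH j]
      exact associated_unit_mul_left _ _ (isUnit_neg_one.pow _)
  refine (bijective_zmod_natAbs_det_iff_isUnit_gcd hdet hδ0).trans ?_
  rw [hgcd, ← normalize_eq_one, Finset.normalize_gcd]

/-- General `D`-dimensional folding criterion. Let `Λ ⊆ ℤ^D` (here `D = d + 1`)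
be the full-rank sublattice generated by the rows of `V`, with `N = |det V| ≠ 0`.
Let `δ` be a nonzero direction vector with entries in `{-1, 0, 1}`, normalized
(after reordering) so that its first coordinate is `+1`.  Let `H` be the
`(D-1) × D` matrix with entries `H r j = v_{j,r} - δ_r · v_{j,1}` (for rows
`r = 2, …, D`), i.e. `u_{rj} = v_{jr} - v_{j1}` if `δ_r = 1`,
`u_{rj} = v_{jr} + v_{j1}` if `δ_r = -1`, and `u_{rj} = v_{jr}` if `δ_r = 0`,
and let `H_i` be `H` with column `i` deleted.  Then the map `i ↦ i·δ mod Λ`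
from `ℤ_N` to `ℤ^D/Λ` is a bijection if and only if
`gcd(det H₁, …, det H_D) = 1`. -/
theorem folding_multidim_gcd_criterion (d : ℕ)
    (V : Matrix (Fin (d + 1)) (Fin (d + 1)) ℤ)
    (δ : Fin (d + 1) → ℤ)
    (hδ : ∀ r, δ r = -1 ∨ δ r = 0 ∨ δ r = 1)
    (hδ0 : δ 0 = 1)
    (Λ : AddSubgroup (Fin (d + 1) → ℤ))
    (hΛ : Λ = AddSubgroup.closure (Set.range fun j r => V j r))
    (N : ℕ) (hN : N = V.det.natAbs) (hN0 : N ≠ 0)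
    (H : Matrix (Fin d) (Fin (d + 1)) ℤ)
    (hH : ∀ r j, H r j = V j r.succ - δ r.succ * V j 0) :
    Function.Bijective
        (fun i : ZMod N =>
          (QuotientAddGroup.mk ((i.val : ℤ) • δ) : (Fin (d + 1) → ℤ) ⧸ Λ)) ↔
      Finset.univ.gcd (fun i : Fin (d + 1) =>
        (Matrix.of fun r c : Fin d => H r (i.succAbove c)).det) = 1 :=
  folding_multidim_gcd_criterion_general d V δ hδ0 Λ hΛ N hN hN0 H hH
end

section
/- Let S be a finite shape in ℤ² and suppose there is an infinite S-DDC with m dots, i.e., an infinite set V ⊆ ℤ² of dots such that every translate of S contains exactly m dots of V and V is a distinct difference configuration (all difference vectors between pairs of dots of V lying in a common translate of S are distinct). Then for any finite shape R ⊆ ℤ², there exists a translate of R containing at least (m/|S|)·Δ(S, R) dots of V, where Δ(S, R) = max over translates of the size of the intersection S ∩ (R + v). -/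
/-!
Averaging over a large square `B`: as every translate of `S` holds `m` dots of `V`,
`∑_{s ∈ S} |V ∩ (s + B)| = m |B|`, and for each `t ∈ S` the count `|V ∩ (t + B')|`, with `B'` the
square `B` enlarged by twice the radius of `S`, dominates every `|V ∩ (s + B)|`. Summing over the
`Δ` points `t` of a maximal intersection `T = S ∩ (R + v₀)` and exchanging the sums, the translates
`T + w`, `w ∈ B'`, hold on average at least `(m / |S|) Δ |B| / |B'|` dots. Since `|B| / |B'| → 1`
and the largest count over translates of `T` is attained, some translate of `T`, hence of `R`,
holds at least `(m / |S|) Δ` dots.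
-/

def shapeTranslate (S : Finset (ℤ × ℤ)) (v : ℤ × ℤ) : Set (ℤ × ℤ) :=
  (· + v) '' (S : Set (ℤ × ℤ))

open Finset

section dotCount

open scoped Classical

variable {G : Type*} [AddCommGroup G]

noncomputable def dotCount (V : Set G) (A : Finset G) (w : G) : ℕ :=
  #{a ∈ A | a + w ∈ V}

theorem dotCount_mono (V : Set G) {A B : Finset G} (h : A ⊆ B) (w : G) :
    dotCount V A w ≤ dotCount V B w :=
  card_le_card (filter_subset_filter _ h)

theorem dotCount_image_add_right [DecidableEq G] (V : Set G) (A : Finset G) (u w : G) :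
    dotCount V (A.image (· + u)) w = dotCount V A (u + w) := by
  unfold dotCount
  rw [filter_image, card_image_of_injective _ (add_left_injective u)]
  simp only [add_assoc]

theorem dotCount_le_of_image_subset [DecidableEq G] (V : Set G) {A A' : Finset G} {u w : G}
    (h : A.image (· + u) ⊆ A') : dotCount V A (u + w) ≤ dotCount V A' w :=
  dotCount_image_add_right V A u w ▸ dotCount_mono V h w

theorem sum_dotCount_comm (V : Set G) (A F : Finset G) :
    ∑ w ∈ F, dotCount V A w = ∑ a ∈ A, dotCount V F a := by
  simp only [dotCount, card_filter]
  rw [Finset.sum_comm]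
  simp only [add_comm]

theorem exists_forall_dotCount_le (V : Set G) (A : Finset G) :
    ∃ w₀, ∀ w, dotCount V A w ≤ dotCount V A w₀ := by
  have hbdd : BddAbove (Set.range (dotCount V A)) :=
    ⟨#A, Set.forall_mem_range.2 fun _ => card_filter_le _ _⟩
  obtain ⟨w₀, hw₀⟩ := Nat.sSup_mem (Set.range_nonempty (dotCount V A)) hbdd
  exact ⟨w₀, fun w => hw₀ ▸ le_csSup hbdd (Set.mem_range_self w)⟩

variable {V : Set G} {S F F' : Finset G} {m : ℕ}

theorem mul_card_le_card_mul_dotCount (hcount : ∀ w, dotCount V S w = m) {t : G}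
    (hF : ∀ w ∈ F, ∀ s ∈ S, w + s - t ∈ F') :
    m * #F ≤ #S * dotCount V F' t :=
  calc m * #F = ∑ s ∈ S, dotCount V F s := by
        rw [← sum_dotCount_comm, sum_congr rfl fun w _ => hcount w, sum_const, smul_eq_mul,
          mul_comm]
    _ ≤ ∑ _s ∈ S, dotCount V F' t := sum_le_sum fun s hs => by
        simpa using dotCount_le_of_image_subset V (u := s - t) (w := t)
          (image_subset_iff.2 fun w hw => by simpa [add_sub_assoc] using hF w hw s hs)
    _ = #S * dotCount V F' t := by rw [sum_const, smul_eq_mul]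

theorem card_mul_mul_card_le_sum_dotCount (hcount : ∀ w, dotCount V S w = m) {T : Finset G}
    (hF : ∀ w ∈ F, ∀ s ∈ S, ∀ t ∈ T, w + s - t ∈ F') :
    #T * (m * #F) ≤ #S * ∑ w ∈ F', dotCount V T w :=
  calc #T * (m * #F) = ∑ _t ∈ T, m * #F := by rw [sum_const, smul_eq_mul]
    _ ≤ ∑ t ∈ T, #S * dotCount V F' t :=
        sum_le_sum fun t ht =>
          mul_card_le_card_mul_dotCount hcount fun w hw s hs => hF w hw s hs t ht
    _ = #S * ∑ w ∈ F', dotCount V T w := by rw [← mul_sum, sum_dotCount_comm]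

end dotCount

theorem ncard_inter_shapeTranslate (V : Set (ℤ × ℤ)) (A : Finset (ℤ × ℤ)) (w : ℤ × ℤ) :
    (V ∩ shapeTranslate A w).ncard = dotCount V A w := by
  classical
  rw [shapeTranslate, Set.inter_comm, ← Set.image_inter_preimage,
    Set.ncard_image_of_injective _ (add_left_injective w), dotCount, ← Set.ncard_coe_finset,
    coe_filter]
  rfl

noncomputable def square (n : ℕ) : Finset (ℤ × ℤ) :=
  Icc (-(n : ℤ)) n ×ˢ Icc (-(n : ℤ)) n

theorem card_square (n : ℕ) : #(square n) = (2 * n + 1) ^ 2 := by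
  rw [square, card_product, Int.card_Icc, sq]
  congr <;> omega

theorem exists_subset_square (S : Finset (ℤ × ℤ)) : ∃ D, S ⊆ square D := by
  refine ⟨S.sup fun s => max s.1.natAbs s.2.natAbs, fun s hs => ?_⟩
  have hle := le_sup (f := fun s : ℤ × ℤ => max s.1.natAbs s.2.natAbs) hs
  simp only [square, mem_product, mem_Icc] at hle ⊢
  omega

theorem add_sub_mem_square {a b c : ℕ} {w s t : ℤ × ℤ} (hw : w ∈ square a) (hs : s ∈ square b)
    (ht : t ∈ square c) : w + s - t ∈ square (a + b + c) := by
  simp only [square, mem_product, mem_Icc, Prod.fst_sub, Prod.snd_sub, Prod.fst_add,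
    Prod.snd_add] at hw hs ht ⊢
  push_cast
  omega

theorem le_of_forall_mul_sq_le {a b c : ℕ}
    (h : ∀ n : ℕ, a * (2 * n + 1) ^ 2 ≤ b * (2 * n + 1 + c) ^ 2) : a ≤ b := by
  by_contra! hba
  obtain ⟨x, hx⟩ : ∃ x, x = 2 * (b * (2 * c + c ^ 2)) + 1 := ⟨_, rfl⟩
  have h1 : (b + 1) * x ^ 2 ≤ b * (x + c) ^ 2 := hx ▸ (Nat.mul_le_mul_right _ hba).trans (h _)
  have h2 : x ^ 2 ≤ b * (2 * c + c ^ 2) * x :=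
    calc x ^ 2 ≤ 2 * b * c * x + b * c ^ 2 := by nlinarith
      _ ≤ 2 * b * c * x + b * c ^ 2 * x :=
          Nat.add_le_add_left (Nat.le_mul_of_pos_right _ (by omega)) _
      _ = b * (2 * c + c ^ 2) * x := by ring
  nlinarith

theorem exists_mul_card_le_card_mul_dotCount {V : Set (ℤ × ℤ)} {S T : Finset (ℤ × ℤ)} {m : ℕ}
    (hcount : ∀ w, dotCount V S w = m) (hTS : T ⊆ S) :
    ∃ w, m * #T ≤ #S * dotCount V T w := by
  obtain ⟨D, hD⟩ := exists_subset_square S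
  obtain ⟨w₀, hw₀⟩ := exists_forall_dotCount_le V T
  refine ⟨w₀, le_of_forall_mul_sq_le (c := 4 * D) fun n => ?_⟩
  calc m * #T * (2 * n + 1) ^ 2 = #T * (m * #(square n)) := by rw [card_square]; ring
    _ ≤ #S * ∑ w ∈ square (n + D + D), dotCount V T w :=
        card_mul_mul_card_le_sum_dotCount hcount fun w hw s hs t ht =>
          add_sub_mem_square hw (hD hs) (hD (hTS ht))
    _ ≤ #S * ∑ _w ∈ square (n + D + D), dotCount V T w₀ := by gcongr; exact hw₀ _
    _ = #S * dotCount V T w₀ * (2 * n + 1 + 4 * D) ^ 2 := by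
        rw [sum_const, card_square, smul_eq_mul]; ring

theorem infinite_DDC_averaging_general (S R : Finset (ℤ × ℤ))
    (V : Set (ℤ × ℤ)) (m : ℕ)
    (hcount : ∀ v : ℤ × ℤ, (V ∩ shapeTranslate S v).ncard = m)
    (Δ : ℕ)
    (hΔmax : ∃ v : ℤ × ℤ, ((S : Set (ℤ × ℤ)) ∩ shapeTranslate R v).ncard = Δ) :
    ∃ v : ℤ × ℤ, ((m : ℚ) / S.card) * Δ ≤ ((V ∩ shapeTranslate R v).ncard : ℚ) := by
  obtain ⟨v₀, hv₀⟩ := hΔmax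
  set T := S ∩ R.image (· + v₀)
  have hT : #T = Δ := by
    rw [← hv₀, ← Set.ncard_coe_finset, coe_inter, coe_image, shapeTranslate]
  obtain ⟨w, hw⟩ := exists_mul_card_le_card_mul_dotCount (V := V) (T := T)
    (fun w => by rw [← ncard_inter_shapeTranslate, hcount]) inter_subset_left
  have hTR : dotCount V T w ≤ (V ∩ shapeTranslate R (v₀ + w)).ncard :=
    ncard_inter_shapeTranslate V R _ ▸
      (dotCount_mono V inter_subset_right w).trans_eq (dotCount_image_add_right V R v₀ w)
  refine ⟨v₀ + w, ?_⟩
  rcases (#S).eq_zero_or_pos with hS | hS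
  · simp [hS]
  rw [div_mul_eq_mul_div, div_le_iff₀ (by exact_mod_cast hS), mul_comm _ (#S : ℚ), ← hT]
  exact_mod_cast hw.trans (Nat.mul_le_mul_left _ hTR)

/-- Averaging bound: if `V` is an infinite `S`-DDC with `m` dots (every
translate of `S` contains exactly `m` dots of `V`, and all difference vectors
between dots of `V` lying in a common translate of `S` are distinct), and
`Δ` is the maximal size of an intersection of a translate of `S` with a
translate of `R`, then some translate of `R` contains at least `(m/|S|)·Δ`
dots of `V`. -/
theorem infinite_DDC_averaging (S R : Finset (ℤ × ℤ)) (hS : S.Nonempty)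
    (V : Set (ℤ × ℤ)) (hVinf : V.Infinite) (m : ℕ)
    (hcount : ∀ v : ℤ × ℤ, (V ∩ shapeTranslate S v).ncard = m)
    (hDDC : ∀ v : ℤ × ℤ, ∀ p ∈ V ∩ shapeTranslate S v, ∀ q ∈ V ∩ shapeTranslate S v,
      ∀ p' ∈ V ∩ shapeTranslate S v, ∀ q' ∈ V ∩ shapeTranslate S v,
        p ≠ q → p - q = p' - q' → p = p' ∧ q = q')
    (Δ : ℕ)
    (hΔub : ∀ v : ℤ × ℤ, ((S : Set (ℤ × ℤ)) ∩ shapeTranslate R v).ncard ≤ Δ)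
    (hΔmax : ∃ v : ℤ × ℤ, ((S : Set (ℤ × ℤ)) ∩ shapeTranslate R v).ncard = Δ) :
    ∃ v : ℤ × ℤ, ((m : ℚ) / S.card) * Δ ≤ ((V ∩ shapeTranslate R v).ncard : ℚ) :=
  infinite_DDC_averaging_general S R V m hcount Δ hΔmax
end

section
/- Let α be a primitive element of GF(2^m) with 2^m − 1 ≥ n₁n₂⋯n_D, let d = ⌈log₂ D⌉, and let A be a d × D binary matrix with distinct columns. Define, for each index i = (i₁,…,i_D) with 0 ≤ i_ℓ ≤ n_ℓ − 1, the column h_i = (1; A·iᵀ mod 2; α^{f(i)}) where f(i) = Σ_{j=1}^D i_j ∏_{ℓ=j+1}^D n_ℓ. Then the binary linear code with parity check matrix H = (h_i) corrects any D-dimensional burst error of length 2 in an n₁ × ⋯ × n_D array codeword: all syndromes of single errors and of errors in two positions differing by one in exactly one coordinate are nonzero and pairwise distinct. -/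
/-!
The exponent `f i` is the mixed-radix value of `i` (Mathlib's `finPiFinEquiv` after reversing the
coordinates), so `f` is injective with values below `∏ nℓ ≤ 2^m - 1 = orderOf α`; hence
`i ↦ α ^ f i` is injective. A single error has syndrome `(1, A i, α ^ f i)`, while the burst
`{a, a + eℓ}` has syndrome `(0, A eℓ, α ^ f a * (1 + α ^ wℓ))` with `wℓ = ∏_{k > ℓ} nk`, and
`0 < wℓ < ∏ n` makes the last factor nonzero. The parity bit separates the two kinds of bursts,
the distinct columns of `A` recover `ℓ`, and the last coordinate then recovers `f a`.
-/

open Finset Matrix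

section PrimitiveElement

variable {M : Type*} [GroupWithZero M] {α : M}

theorem orderOf_eq_card_sub_one_of_forall_eq_pow (hα0 : α ≠ 0)
    (hα : ∀ x : M, x ≠ 0 → ∃ k : ℕ, α ^ k = x) : orderOf α = Nat.card M - 1 := by
  rw [← Nat.card_units, ← Units.val_mk0 hα0, orderOf_units]
  refine orderOf_eq_card_of_forall_mem_powers fun u => ?_
  obtain ⟨k, hk⟩ := hα u u.ne_zero
  exact ⟨k, Units.ext (by simpa using hk)⟩

theorem ne_zero_of_forall_eq_pow (hα : ∀ x : M, x ≠ 0 → ∃ k : ℕ, α ^ k = x)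
    (hM : 2 < Nat.card M) : α ≠ 0 := by
  rintro rfl
  have hunits (u : Mˣ) : u = 1 := by
    obtain ⟨_ | k, hk⟩ := hα u u.ne_zero
    · exact Units.ext (by simpa using hk.symm)
    · exact absurd hk.symm (by simp [u.ne_zero])
  have : Subsingleton Mˣ := ⟨fun u v => (hunits u).trans (hunits v).symm⟩
  have := Nat.card_of_subsingleton (1 : Mˣ)
  rw [Nat.card_units] at this
  omega

theorem pow_injOn_Iio_card_sub_one (hα : ∀ x : M, x ≠ 0 → ∃ k : ℕ, α ^ k = x) :
    (Set.Iio (Nat.card M - 1)).InjOn (α ^ ·) := by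
  by_cases hM : 2 < Nat.card M
  · rw [← orderOf_eq_card_sub_one_of_forall_eq_pow (ne_zero_of_forall_eq_pow hα hM) hα]
    exact pow_injOn_Iio_orderOf
  · intro a ha b hb _
    simp only [Set.mem_Iio] at ha hb
    omega

end PrimitiveElement

section MixedRadix

variable {D : ℕ} {n : Fin D → ℕ}

def placeValue (n : Fin D → ℕ) (j : Fin D) : ℕ := ∏ ℓ ∈ univ.filter (fun ℓ => j < ℓ), n ℓ

def mixedRadix (i : ∀ ℓ, Fin (n ℓ)) : ℕ := ∑ j, (i j : ℕ) * placeValue n j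

theorem placeValue_rev (j : Fin D) :
    placeValue n j.rev = ∏ t : Fin j, n (Fin.castLE j.is_lt.le t).rev := by
  symm
  refine Finset.prod_bij (fun t _ => (Fin.castLE j.is_lt.le t).rev) ?_ ?_ ?_ fun _ _ => rfl
  · intro t _
    simp only [mem_filter, mem_univ, true_and, Fin.lt_def, Fin.val_rev, Fin.val_castLE]
    omega
  · intro t _ t' _ h
    have := t.is_lt.trans_le j.is_lt.le
    have := t'.is_lt.trans_le j.is_lt.le
    simp only [Fin.ext_iff, Fin.val_rev, Fin.val_castLE] at h ⊢
    omega
  · intro ℓ hℓ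
    simp only [mem_filter, mem_univ, true_and, Fin.lt_def, Fin.val_rev] at hℓ
    refine ⟨⟨ℓ.rev, by simp only [Fin.val_rev]; omega⟩, mem_univ _, ?_⟩
    simp only [Fin.ext_iff, Fin.val_rev, Fin.val_castLE]
    omega

theorem placeValue_pos (i : ∀ k, Fin (n k)) (j : Fin D) : 0 < placeValue n j :=
  prod_pos fun k _ => (i k).pos

theorem mixedRadix_eq_finPiFinEquiv (i : ∀ ℓ, Fin (n ℓ)) :
    mixedRadix i = finPiFinEquiv (n := fun k => n k.rev) (fun k => i k.rev) := by
  rw [finPiFinEquiv_apply, mixedRadix, ← Equiv.sum_comp Fin.revPerm]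
  refine Fintype.sum_congr _ _ fun j => ?_
  rw [Fin.revPerm_apply, placeValue_rev]

theorem mixedRadix_lt_prod (i : ∀ ℓ, Fin (n ℓ)) : mixedRadix i < ∏ ℓ, n ℓ := by
  rw [mixedRadix_eq_finPiFinEquiv]
  exact (Fin.is_lt _).trans_eq (Equiv.prod_comp Fin.revPerm n)

theorem mixedRadix_injective : Function.Injective (mixedRadix (n := n)) := by
  intro a b h
  simp only [mixedRadix_eq_finPiFinEquiv, Fin.val_inj, EmbeddingLike.apply_eq_iff_eq] at h
  funext j
  obtain ⟨k, rfl⟩ := Fin.rev_surjective j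
  exact congr_fun h k

end MixedRadix

namespace ConstructionA

variable {D : ℕ} {n : Fin D → ℕ}

def IsUnitStep (ℓ : Fin D) (a b : ∀ k, Fin (n k)) : Prop :=
  (b ℓ : ℕ) = a ℓ + 1 ∧ ∀ k, k ≠ ℓ → a k = b k

def Adjacent (i i' : ∀ k, Fin (n k)) : Prop :=
  ∃ ℓ : Fin D, ((i' ℓ : ℕ) = i ℓ + 1 ∨ (i ℓ : ℕ) = i' ℓ + 1) ∧ ∀ k, k ≠ ℓ → i k = i' k

def IsTwoBurst (B : Finset (∀ k, Fin (n k))) : Prop :=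
  (∃ i, B = {i}) ∨ ∃ i i', Adjacent i i' ∧ B = {i, i'}

theorem IsTwoBurst.eq_singleton_or_eq_pair {B : Finset (∀ k, Fin (n k))} (hB : IsTwoBurst B) :
    (∃ i, B = {i}) ∨ ∃ ℓ a b, IsUnitStep ℓ a b ∧ B = {a, b} := by
  rcases hB with hB | ⟨i, i', ⟨ℓ, hi | hi, hk⟩, rfl⟩
  · exact .inl hB
  · exact .inr ⟨ℓ, i, i', ⟨hi, hk⟩, rfl⟩
  · exact .inr ⟨ℓ, i', i, ⟨hi, fun k hkℓ => (hk k hkℓ).symm⟩, pair_comm i i'⟩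

def reduceModTwo (i : ∀ k, Fin (n k)) : Fin D → ZMod 2 := fun j => ((i j : ℕ) : ZMod 2)

def column {d : ℕ} {K : Type*} [Monoid K] (A : Matrix (Fin d) (Fin D) (ZMod 2)) (α : K)
    (i : ∀ k, Fin (n k)) : ZMod 2 × (Fin d → ZMod 2) × K :=
  (1, A *ᵥ reduceModTwo i, α ^ mixedRadix i)

namespace IsUnitStep

variable {ℓ : Fin D} {a b : ∀ k, Fin (n k)}

theorem ne (h : IsUnitStep ℓ a b) : a ≠ b := by
  rintro rfl
  exact absurd h.1 (by omega)

theorem mixedRadix_eq (h : IsUnitStep ℓ a b) :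
    mixedRadix b = mixedRadix a + placeValue n ℓ := by
  simp only [mixedRadix]
  rw [← add_sum_erase _ _ (mem_univ ℓ), ← add_sum_erase _ _ (mem_univ ℓ), h.1,
    sum_congr rfl fun k hk => by rw [← h.2 k (ne_of_mem_erase hk)]]
  ring

theorem placeValue_lt (h : IsUnitStep ℓ a b) : placeValue n ℓ < ∏ k, n k := by
  have := mixedRadix_lt_prod b
  rw [h.mixedRadix_eq] at this
  omega

theorem reduceModTwo_add (h : IsUnitStep ℓ a b) :
    reduceModTwo a + reduceModTwo b = Pi.single ℓ 1 := by
  funext j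
  by_cases hj : j = ℓ
  · subst hj
    simp only [reduceModTwo, Pi.add_apply, Pi.single_eq_same, h.1, Nat.cast_add, Nat.cast_one,
      ← add_assoc, CharTwo.add_self_eq_zero, zero_add]
  · simp only [reduceModTwo, Pi.add_apply, Pi.single_eq_of_ne hj, h.2 j hj,
      CharTwo.add_self_eq_zero]

theorem column_add {d : ℕ} {K : Type*} [CommRing K] (A : Matrix (Fin d) (Fin D) (ZMod 2))
    (α : K) (h : IsUnitStep ℓ a b) :
    column A α a + column A α b = (0, A.col ℓ, α ^ mixedRadix a * (1 + α ^ placeValue n ℓ)) := by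
  simp only [column, Prod.mk_add_mk, ← Matrix.mulVec_add, h.reduceModTwo_add,
    mulVec_single_one, h.mixedRadix_eq, pow_add]
  exact Prod.ext (CharTwo.add_self_eq_zero 1) (Prod.ext rfl (by ring))

end IsUnitStep

theorem column_injective {d : ℕ} {K : Type*} [GroupWithZero K] {α : K}
    {A : Matrix (Fin d) (Fin D) (ZMod 2)} (hα : ∀ x : K, x ≠ 0 → ∃ k : ℕ, α ^ k = x)
    (hN : ∏ k, n k ≤ Nat.card K - 1) : Function.Injective (column (n := n) A α) := by
  intro i j h
  have hinj := (pow_injOn_Iio_card_sub_one hα).mono (Set.Iio_subset_Iio hN)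
  exact mixedRadix_injective
    (hinj (mixedRadix_lt_prod i) (mixedRadix_lt_prod j) (congr_arg (·.2.2) h))

section CharTwo

variable {d : ℕ} {K : Type*} [Field K] [CharP K 2] {α : K} {A : Matrix (Fin d) (Fin D) (ZMod 2)}

namespace IsUnitStep

variable {ℓ : Fin D} {a b : ∀ k, Fin (n k)}

theorem one_add_pow_placeValue_ne_zero (h : IsUnitStep ℓ a b)
    (hinj : (Set.Iio (∏ k, n k)).InjOn (α ^ ·)) : 1 + α ^ placeValue n ℓ ≠ 0 := by
  intro h0
  have hw := placeValue_pos a ℓ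
  have hpow : α ^ placeValue n ℓ = α ^ 0 := by
    linear_combination h0 - CharTwo.two_eq_zero (R := K)
  exact hw.ne' (hinj h.placeValue_lt (hw.trans h.placeValue_lt) hpow)

theorem column_add_ne_zero (hα : ∀ x : K, x ≠ 0 → ∃ k : ℕ, α ^ k = x)
    (hN : ∏ k, n k ≤ Nat.card K - 1) (h : IsUnitStep ℓ a b) :
    column A α a + column A α b ≠ 0 := by
  have hinj := (pow_injOn_Iio_card_sub_one hα).mono (Set.Iio_subset_Iio hN)
  have hα0 : α ≠ 0 := ne_zero_of_forall_eq_pow hα (by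
    have := placeValue_pos a ℓ
    have := h.placeValue_lt
    omega)
  rw [h.column_add]
  intro h0
  exact mul_ne_zero (pow_ne_zero _ hα0) (h.one_add_pow_placeValue_ne_zero hinj)
    (congr_arg (·.2.2) h0)

theorem eq_of_column_add_eq (hA : Function.Injective A.col)
    (hα : ∀ x : K, x ≠ 0 → ∃ k : ℕ, α ^ k = x) (hN : ∏ k, n k ≤ Nat.card K - 1)
    {ℓ' : Fin D} {a' b' : ∀ k, Fin (n k)} (h : IsUnitStep ℓ a b) (h' : IsUnitStep ℓ' a' b')
    (heq : column A α a + column A α b = column A α a' + column A α b') : a = a' ∧ b = b' := by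
  have hinj := (pow_injOn_Iio_card_sub_one hα).mono (Set.Iio_subset_Iio hN)
  rw [h.column_add, h'.column_add] at heq
  simp only [Prod.mk.injEq, true_and] at heq
  obtain ⟨hcol, hpow⟩ := heq
  obtain rfl := hA hcol
  have ha : a = a' := mixedRadix_injective <| hinj (mixedRadix_lt_prod a) (mixedRadix_lt_prod a')
    (mul_right_cancel₀ (h.one_add_pow_placeValue_ne_zero hinj) hpow)
  subst ha
  exact ⟨rfl, mixedRadix_injective (by rw [h.mixedRadix_eq, h'.mixedRadix_eq])⟩

end IsUnitStep

variable {B B' : Finset (∀ k, Fin (n k))}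

theorem IsTwoBurst.sum_column_ne_zero (hα : ∀ x : K, x ≠ 0 → ∃ k : ℕ, α ^ k = x)
    (hN : ∏ k, n k ≤ Nat.card K - 1) (hB : IsTwoBurst B) : ∑ i ∈ B, column A α i ≠ 0 := by
  rcases hB.eq_singleton_or_eq_pair with ⟨i, rfl⟩ | ⟨ℓ, a, b, h, rfl⟩
  · rw [sum_singleton]
    exact fun h0 => one_ne_zero (congr_arg Prod.fst h0)
  · rw [sum_pair h.ne]
    exact h.column_add_ne_zero hα hN

theorem IsTwoBurst.eq_of_sum_column_eq (hA : Function.Injective A.col)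
    (hα : ∀ x : K, x ≠ 0 → ∃ k : ℕ, α ^ k = x) (hN : ∏ k, n k ≤ Nat.card K - 1)
    (hB : IsTwoBurst B) (hB' : IsTwoBurst B')
    (heq : ∑ i ∈ B, column A α i = ∑ i ∈ B', column A α i) : B = B' := by
  rcases hB.eq_singleton_or_eq_pair with ⟨i, rfl⟩ | ⟨ℓ, a, b, h, rfl⟩ <;>
    rcases hB'.eq_singleton_or_eq_pair with ⟨j, rfl⟩ | ⟨ℓ', a', b', h', rfl⟩
  · rw [sum_singleton, sum_singleton] at heq
    rw [column_injective hα hN heq]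
  · simpa [sum_pair h'.ne, h'.column_add, column] using congr_arg Prod.fst heq
  · simpa [sum_pair h.ne, h.column_add, column] using congr_arg Prod.fst heq
  · rw [sum_pair h.ne, sum_pair h'.ne] at heq
    obtain ⟨rfl, rfl⟩ := h.eq_of_column_add_eq hA hα hN h' heq
    rfl

end CharTwo

end ConstructionA

theorem constructionA_corrects_2bursts_general
    (D : ℕ) (n : Fin D → ℕ)
    (m : ℕ) (hsize : ∏ ℓ, n ℓ ≤ 2 ^ m - 1)
    (α : GaloisField 2 m) (hα : ∀ x : GaloisField 2 m, x ≠ 0 → ∃ k : ℕ, α ^ k = x)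
    (d : ℕ)
    (A : Matrix (Fin d) (Fin D) (ZMod 2))
    (hA : ∀ j j' : Fin D, (fun r => A r j) = (fun r => A r j') → j = j') :
    letI I := (ℓ : Fin D) → Fin (n ℓ)
    letI h : I → (ZMod 2) × (Fin d → ZMod 2) × GaloisField 2 m := fun i =>
      (1, A.mulVec (fun j => ((i j : ℕ) : ZMod 2)),
        α ^ (∑ j, (i j : ℕ) * ∏ ℓ ∈ Finset.univ.filter (fun ℓ => j < ℓ), n ℓ))
    letI Adjacent : I → I → Prop := fun i i' =>
      ∃ ℓ : Fin D, (((i' ℓ : ℕ) = (i ℓ : ℕ) + 1) ∨ ((i ℓ : ℕ) = (i' ℓ : ℕ) + 1)) ∧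
        ∀ k : Fin D, k ≠ ℓ → i k = i' k
    letI IsBurst : Finset I → Prop := fun B =>
      (∃ i, B = {i}) ∨ (∃ i i', Adjacent i i' ∧ B = {i, i'})
    ∀ B₁ B₂ : Finset I, IsBurst B₁ → IsBurst B₂ →
      (∑ i ∈ B₁, h i ≠ 0) ∧ ((∑ i ∈ B₁, h i) = (∑ i ∈ B₂, h i) → B₁ = B₂) := by
  intro B₁ B₂ hB₁ hB₂
  have hN : ∏ ℓ, n ℓ ≤ Nat.card (GaloisField 2 m) - 1 := by
    rcases Nat.eq_zero_or_pos m with rfl | hm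
    · rw [pow_zero] at hsize
      omega
    · rwa [GaloisField.card 2 m hm.ne']
  exact ⟨ConstructionA.IsTwoBurst.sum_column_ne_zero hα hN hB₁,
    ConstructionA.IsTwoBurst.eq_of_sum_column_eq hA hα hN hB₁ hB₂⟩

/-- Construction A corrects every `D`-dimensional burst of length 2.
Positions of an `n₁ × ⋯ × n_D` array are indexed by `i : (ℓ : Fin D) → Fin (n ℓ)`.
With `α` a primitive element of `GF(2^m)`, `2^m - 1 ≥ ∏ n_ℓ`, `d = ⌈log₂ D⌉`,
and `A` a `d × D` binary matrix with distinct columns, the column of the parity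
check matrix at position `i` is `h i = (1, A·iᵀ, α^{f i})` with
`f i = Σ_j i_j ∏_{ℓ > j} n_ℓ`.  Then the syndromes of all 2-burst error
patterns (one position, or two positions differing by 1 in exactly one
coordinate) are nonzero and pairwise distinct. -/
theorem constructionA_corrects_2bursts
    (D : ℕ) (hD : 0 < D) (n : Fin D → ℕ) (hn : ∀ ℓ, 0 < n ℓ)
    (m : ℕ) (hm : 0 < m) (hsize : ∏ ℓ, n ℓ ≤ 2 ^ m - 1)
    (α : GaloisField 2 m) (hα : ∀ x : GaloisField 2 m, x ≠ 0 → ∃ k : ℕ, α ^ k = x)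
    (d : ℕ) (hd : d = Nat.clog 2 D)
    (A : Matrix (Fin d) (Fin D) (ZMod 2))
    (hA : ∀ j j' : Fin D, (fun r => A r j) = (fun r => A r j') → j = j') :
    letI I := (ℓ : Fin D) → Fin (n ℓ)
    letI h : I → (ZMod 2) × (Fin d → ZMod 2) × GaloisField 2 m := fun i =>
      (1, A.mulVec (fun j => ((i j : ℕ) : ZMod 2)),
        α ^ (∑ j, (i j : ℕ) * ∏ ℓ ∈ Finset.univ.filter (fun ℓ => j < ℓ), n ℓ))
    letI Adjacent : I → I → Prop := fun i i' =>
      ∃ ℓ : Fin D, (((i' ℓ : ℕ) = (i ℓ : ℕ) + 1) ∨ ((i ℓ : ℕ) = (i' ℓ : ℕ) + 1)) ∧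
        ∀ k : Fin D, k ≠ ℓ → i k = i' k
    letI IsBurst : Finset I → Prop := fun B =>
      (∃ i, B = {i}) ∨ (∃ i i', Adjacent i i' ∧ B = {i, i'})
    ∀ B₁ B₂ : Finset I, IsBurst B₁ → IsBurst B₂ →
      (∑ i ∈ B₁, h i ≠ 0) ∧ ((∑ i ∈ B₁, h i) = (∑ i ∈ B₂, h i) → B₁ = B₂) :=
  constructionA_corrects_2bursts_general D n m hsize α hα d A hA
end
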